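/- arXiv:1407.7960 — 5 statements merged into one kernel-verified Lean document; each statement's English description precedes it below -/
import Mathlib

section
/- For 0 ≤ 2k ≤ n, the identity [n]_q!/([n-2k]_q! · [k]_{q^2}! · (1+q)^k) = [n choose 2k]_q · M_q(2k-1) holds, where M_q(2k-1) = [2k-1]_q[2k-3]_q⋯[1]_q is the product of q-analogs of odd numbers below 2k. -/
open Polynomial Finset
noncomputable section
abbrev Fq : Type := RatFunc ℚ
def qv : Fq := RatFunc.X
def qint (n : ℕ) : Fq := ∑ i ∈ Finset.range n, qv ^ i
def qfact (n : ℕ) : Fq := ∏ i ∈ Finset.range n, qint (i + 1)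
def qbinom (n k : ℕ) : Fq := if k ≤ n then qfact n / (qfact k * qfact (n - k)) else 0
def qint2 (n : ℕ) : Fq := ∑ i ∈ Finset.range n, qv ^ (2 * i)
def qfact2 (n : ℕ) : Fq := ∏ i ∈ Finset.range n, qint2 (i + 1)
def qbinom2 (n k : ℕ) : Fq := if k ≤ n then qfact2 n / (qfact2 k * qfact2 (n - k)) else 0
def Modd (k : ℕ) : Fq := ∏ j ∈ Finset.range k, qint (2 * j + 1)

/-! The even q-integers factor as `[2i]_q = [i]_{q²} (1 + q)`, so the even factors of `[2k]_q!`
multiply to `[k]_{q²}! (1 + q)^k` and the odd ones to `M_q(2k-1)`. This gives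
`[2k]_q! = M_q(2k-1) [k]_{q²}! (1 + q)^k`, and the identity is `[n choose 2k]_q` with this
factorization of `[2k]_q!` substituted in. -/

lemma qint_eq_algebraMap (n : ℕ) : qint n = algebraMap ℚ[X] Fq (∑ i ∈ range n, X ^ i) := by
  simp [qint, qv, RatFunc.algebraMap_X]

lemma qint_ne_zero {n : ℕ} (hn : n ≠ 0) : qint n ≠ 0 := by
  have hp : (∑ i ∈ range n, (X : ℚ[X]) ^ i).eval 1 ≠ 0 := by simp [eval_finsetSum, hn]
  rw [qint_eq_algebraMap, map_ne_zero_iff _ (RatFunc.algebraMap_injective ℚ)]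
  exact fun h => hp (by rw [h, eval_zero])

lemma qint_two : qint 2 = 1 + qv := by
  simp [qint, sum_range_succ]

lemma qint_two_mul (i : ℕ) : qint (2 * i) = qint2 i * (1 + qv) := by
  induction i with
  | zero => simp [qint, qint2]
  | succ i ih =>
    have h2 : qint2 (i + 1) = qint2 i + qv ^ (2 * i) := sum_range_succ _ _
    rw [mul_add_one, qint, sum_range_succ, sum_range_succ, ← qint, ih, h2]
    ring

lemma qint2_ne_zero {n : ℕ} (hn : n ≠ 0) : qint2 n ≠ 0 :=
  left_ne_zero_of_mul (qint_two_mul n ▸ qint_ne_zero (by omega))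

lemma one_add_qv_ne_zero : 1 + qv ≠ 0 :=
  qint_two ▸ qint_ne_zero two_ne_zero

lemma qfact_ne_zero (n : ℕ) : qfact n ≠ 0 :=
  prod_ne_zero_iff.2 fun i _ => qint_ne_zero i.succ_ne_zero

lemma qfact2_ne_zero (n : ℕ) : qfact2 n ≠ 0 :=
  prod_ne_zero_iff.2 fun i _ => qint2_ne_zero i.succ_ne_zero

lemma qfact_two_mul (k : ℕ) : qfact (2 * k) = Modd k * qfact2 k * (1 + qv) ^ k := by
  induction k with
  | zero => simp [qfact, qfact2, Modd]
  | succ k ih =>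
    have hM : Modd (k + 1) = Modd k * qint (2 * k + 1) := prod_range_succ _ _
    have hF : qfact2 (k + 1) = qfact2 k * qint2 (k + 1) := prod_range_succ _ _
    rw [mul_add_one, qfact, prod_range_succ, prod_range_succ, ← qfact, ih, hM, hF, add_assoc,
      ← mul_add_one, qint_two_mul]
    ring

/-- . -/
theorem stmt_2 (n k : ℕ) (h : 2 * k ≤ n) :
    qfact n / (qfact (n - 2 * k) * qfact2 k * (1 + qv) ^ k) = qbinom n (2 * k) * Modd k := by
  have hden : qfact (n - 2 * k) * qfact2 k * (1 + qv) ^ k ≠ 0 :=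
    mul_ne_zero (mul_ne_zero (qfact_ne_zero _) (qfact2_ne_zero k)) (pow_ne_zero k one_add_qv_ne_zero)
  rw [qbinom, if_pos h, div_mul_eq_mul_div,
    div_eq_div_iff hden (mul_ne_zero (qfact_ne_zero _) (qfact_ne_zero _)), qfact_two_mul]
  ring
end
end

section
/- Let L : ℚ(q)[x] → ℚ(q) be the linear functional determined by L(H_n) = δ_{n,0}, where H_n are the q-Hermite polynomials defined by the recurrence H_{n+1} = x H_n - q^{n-1}[n]_q H_{n-1} with H_0 = 1, H_1 = x. Then L(H_n · H_m) = q^{C(n,2)} [n]_q! · δ_{n,m}, where C(n,2) = n(n-1)/2. -/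
/-!
Any sequence with `P 0 = 1`, `P 1 = X` and `P (n + 2) = X * P (n + 1) - c n * P n` is orthogonal for
the functional with `L (P n) = δ n 0`, with `L (P n ^ 2) = c 0 ⋯ c (n - 1)`: by induction on the
larger index, expand `P (k + 2)` by the recurrence and move the factor `X` onto the other
polynomial, where the recurrence read backwards turns `X * P (j + 1)` into `P (j + 2) + c j * P j`.
For the q-Hermite polynomials `c i = q ^ i [i + 1]_q`, and `∏_{i < n} q ^ i [i + 1]_q` is
`q ^ C(n, 2) [n]_q!` since `∑_{i < n} i = C(n, 2)`.
-/

open Polynomial Finset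
noncomputable section
def Hq : ℕ → Polynomial Fq
  | 0 => 1
  | 1 => Polynomial.X
  | (n + 2) => Polynomial.X * Hq (n + 1) - Polynomial.C (qv ^ n * qint (n + 1)) * Hq n

section ThreeTermRecurrence

variable {R : Type*} [CommRing R]

theorem LinearMap.apply_C_mul (L : R[X] →ₗ[R] R) (a : R) (p : R[X]) : L (C a * p) = a * L p := by
  rw [← smul_eq_C_mul, map_smul, smul_eq_mul]

theorem apply_mul_of_threeTermRecurrence {c : ℕ → R} {P : ℕ → R[X]} (h0 : P 0 = 1) (h1 : P 1 = X)
    (hrec : ∀ n, P (n + 2) = X * P (n + 1) - C (c n) * P n)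
    (L : R[X] →ₗ[R] R) (hL : ∀ n, L (P n) = if n = 0 then 1 else 0) (n m : ℕ) :
    L (P n * P m) = if n = m then ∏ i ∈ range n, c i else 0 := by
  induction m using Nat.strong_induction_on generalizing n with
  | _ m ih =>
    match m, n with
    | 0, n => rw [h0, mul_one, hL]; split_ifs with hn <;> simp [hn]
    | 1, 0 => rw [h0, one_mul, hL]; simp
    | 1, j + 1 =>
      have hpoly : P (j + 1) * P 1 = P (j + 2) * P 0 + C (c j) * (P j * P 0) := by
        rw [hrec, h0, h1]; ring
      rw [hpoly, map_add, L.apply_C_mul, ih 0 one_pos, ih 0 one_pos]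
      rcases j with _ | j <;> simp
    | k + 2, 0 => simp [h0, hL]
    | k + 2, j + 1 =>
      have hpoly : P (j + 1) * P (k + 2) =
          P (j + 2) * P (k + 1) + C (c j) * (P j * P (k + 1)) - C (c k) * (P (j + 1) * P k) := by
        rw [hrec k, hrec j]; ring
      rw [hpoly, map_sub, map_add, L.apply_C_mul, L.apply_C_mul, ih (k + 1) (by omega),
        ih (k + 1) (by omega), ih k (by omega)]
      by_cases hj : j = k + 1
      · subst hj
        rw [if_neg (by omega), if_pos rfl, if_neg (by omega), if_pos rfl, prod_range_succ _ (k + 1)]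
        ring
      by_cases hk : j + 1 = k
      · subst hk
        rw [if_pos rfl, if_neg hj, if_pos rfl, if_neg (by omega), prod_range_succ _ (j + 1)]
        ring
      rw [if_neg (by omega), if_neg hj, if_neg hk, if_neg (by omega)]
      ring

end ThreeTermRecurrence

theorem Hq_add_two (n : ℕ) : Hq (n + 2) = X * Hq (n + 1) - C (qv ^ n * qint (n + 1)) * Hq n := by
  rw [Hq]

theorem prod_range_pow_mul_qint (n : ℕ) :
    ∏ i ∈ range n, qv ^ i * qint (i + 1) = qv ^ (n * (n - 1) / 2) * qfact n := by
  rw [prod_mul_distrib, prod_pow_eq_pow_sum, sum_range_id, qfact]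

/-- Orthogonality of the q-Hermite polynomials with respect to the q-Gaussian functional. -/
theorem stmt_5 (L : Polynomial Fq →ₗ[Fq] Fq)
    (hL : ∀ n : ℕ, L (Hq n) = if n = 0 then 1 else 0) (n m : ℕ) :
    L (Hq n * Hq m) = if n = m then qv ^ (n * (n - 1) / 2) * qfact n else 0 := by
  rw [apply_mul_of_threeTermRecurrence rfl rfl Hq_add_two L hL, prod_range_pow_mul_qint]
end
end

section
/- Let f_1,…,f_N, g_1,…,g_N be Laurent polynomials in one variable over a field F, and let CT(h) denote the constant term of a Laurent polynomial h. Then CT(det[f_j(x_k)]_{j,k=1}^N · det[g_ℓ(x_k^{-1})]_{ℓ,k=1}^N) = N! · det[CT(f_j(x)·g_ℓ(x^{-1}))]_{j,ℓ=1}^N, where on the left CT means the constant term in all N variables x_1,…,x_N jointly. -/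
/-!
Expanding both determinants, `CT(det A · det B)` is the signed sum over pairs `(σ, τ)` of
permutations of `CT(∏ₖ f_{σ k}(x_k) g_{τ k}(x_k⁻¹))`. The `k`-th factor involves only `x_k`,
so this constant term factors as `∏ₖ M_{σ k, τ k}` with `M_{j l} = CT(f_j(x) g_l(x⁻¹))`.
For fixed `σ`, the signed sum over `τ` is `sgn σ · det M`, so each of the `N!` permutations `σ`
contributes `det M`.
-/

open Finset
noncomputable section

variable {F : Type*} [Field F]

/-- Substitute `x_k^{±1}` for the variable of a one-variable Laurent polynomial,
landing in the ring of Laurent polynomials in `N` variables. -/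
def embVar {N : ℕ} (k : Fin N) (ε : ℤ) (f : AddMonoidAlgebra F ℤ) :
    AddMonoidAlgebra F (Fin N →₀ ℤ) :=
  AddMonoidAlgebra.ofCoeff (Finsupp.mapDomain (fun n : ℤ => Finsupp.single k (ε * n)) f.coeff)

/-- `x ↦ x⁻¹` on one-variable Laurent polynomials. -/
def inv1 (f : AddMonoidAlgebra F ℤ) : AddMonoidAlgebra F ℤ :=
  AddMonoidAlgebra.ofCoeff (Finsupp.mapDomain (fun n : ℤ => -n) f.coeff)

/-- Constant term of a multivariate Laurent polynomial. -/
def CTN {N : ℕ} (h : AddMonoidAlgebra F (Fin N →₀ ℤ)) : F := h.coeff 0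

/-- Constant term of a one-variable Laurent polynomial. -/
def CT1 (h : AddMonoidAlgebra F ℤ) : F := h.coeff 0

open Equiv

namespace Matrix
variable {n S R : Type*} [Fintype n] [DecidableEq n] [CommRing S] [CommRing R]

theorem sum_perm_sign_smul_prod_apply_perm (M : Matrix n n R) (σ : Perm n) :
    ∑ τ : Perm n, Perm.sign τ • ∏ i, M (σ i) (τ i) = Perm.sign σ • M.det := by
  have h := det_permute σ M
  rw [← det_transpose, det_apply] at h
  rw [Units.smul_def, zsmul_eq_mul, ← h]
  rfl

theorem sum_perm_sum_perm_sign_mul_sign_smul_prod (M : Matrix n n R) :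
    ∑ σ : Perm n, ∑ τ : Perm n, (Perm.sign σ * Perm.sign τ) • ∏ i, M (σ i) (τ i) =
      (Fintype.card n).factorial • M.det := by
  have inner (σ : Perm n) :
      ∑ τ : Perm n, (Perm.sign σ * Perm.sign τ) • ∏ i, M (σ i) (τ i) = M.det := by
    simp_rw [mul_smul, ← smul_sum, sum_perm_sign_smul_prod_apply_perm, smul_smul,
      Int.units_mul_self, one_smul]
  rw [sum_congr rfl fun σ _ => inner σ, sum_const, card_univ, Fintype.card_perm]

theorem map_det_mul_det_eq_factorial_smul (φ : S →+ R) (A B : Matrix n n S) (M : Matrix n n R)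
    (hφ : ∀ σ τ : Perm n, φ (∏ i, A (σ i) i * B (τ i) i) = ∏ i, M (σ i) (τ i)) :
    φ (A.det * B.det) = (Fintype.card n).factorial • M.det := by
  rw [← sum_perm_sum_perm_sign_mul_sign_smul_prod, det_apply, det_apply, sum_mul_sum, map_sum]
  refine sum_congr rfl fun σ _ => ?_
  rw [map_sum]
  refine sum_congr rfl fun τ _ => ?_
  rw [smul_mul_smul_comm, ← prod_mul_distrib, Units.smul_def, map_zsmul, hφ, ← Units.smul_def]

end Matrix

open AddMonoidAlgebra

section LaurentEmbedding

variable {N : ℕ}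

def embVarRingHom (k : Fin N) (ε : ℤ) :
    AddMonoidAlgebra F ℤ →+* AddMonoidAlgebra F (Fin N →₀ ℤ) :=
  mapDomainRingHom F ((Finsupp.singleAddHom k).comp (AddMonoidHom.mulLeft ε))

@[simp]
theorem coe_embVarRingHom (k : Fin N) (ε : ℤ) : ⇑(embVarRingHom (F := F) k ε) = embVar k ε :=
  rfl

theorem embVar_neg_one (k : Fin N) (f : AddMonoidAlgebra F ℤ) :
    embVar k (-1) f = embVar k 1 (inv1 f) := by
  simp only [embVar, inv1, coeff_ofCoeff, ← Finsupp.mapDomain_comp]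
  congr 2
  funext n
  simp

def ctnAddHom : AddMonoidAlgebra F (Fin N →₀ ℤ) →+ F :=
  (Finsupp.applyAddHom 0).comp (coeffAddEquiv (R := F)).toAddMonoidHom

@[simp]
theorem coe_ctnAddHom : ⇑(ctnAddHom (F := F) (N := N)) = CTN :=
  rfl

-- `gradeBy F (Finsupp.applyAddHom k) 0` is the subalgebra of Laurent polynomials free of `x_k`.
theorem embVar_mem_gradeBy {j k : Fin N} (hjk : j ≠ k) (ε : ℤ) (f : AddMonoidAlgebra F ℤ) :
    embVar j ε f ∈ gradeBy F (Finsupp.applyAddHom k) 0 := by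
  intro ν hν
  obtain ⟨n, -, rfl⟩ := Finset.mem_image.mp (Finsupp.mapDomain_support hν)
  simp [hjk]

theorem CTN_embVar_mul (k : Fin N) (f : AddMonoidAlgebra F ℤ)
    {h : AddMonoidAlgebra F (Fin N →₀ ℤ)}
    (hh : h ∈ gradeBy F (Finsupp.applyAddHom k) 0) :
    CTN (embVar k 1 f * h) = CT1 f * CTN h := by
  induction f using AddMonoidAlgebra.induction_linear with
  | zero => simp [← coe_embVarRingHom, CT1, CTN]
  | add f₁ f₂ h₁ h₂ =>
    simp only [← coe_embVarRingHom, ← coe_ctnAddHom, map_add, add_mul] at *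
    rw [h₁, h₂, CT1, CT1, CT1, coeff_add, Finsupp.add_apply, add_mul]
  | single n r =>
    have hsingle : embVar k 1 (single n r) = single (Finsupp.single k n) r := by
      rw [embVar, coeff_single, Finsupp.mapDomain_single, one_mul]
      rfl
    rw [hsingle, CTN, coeff_single_mul_apply, add_zero, CT1, coeff_single, Finsupp.single_apply]
    split_ifs with hn
    · subst hn; simp [CTN]
    · rw [Finsupp.notMem_support_iff.mp fun hmem => ?_, mul_zero, zero_mul]
      exact hn (by simpa using hh _ hmem)

theorem CTN_prod_embVar (c : Fin N → AddMonoidAlgebra F ℤ) (S : Finset (Fin N)) :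
    CTN (∏ k ∈ S, embVar k 1 (c k)) = ∏ k ∈ S, CT1 (c k) := by
  classical
  induction S using Finset.induction_on with
  | empty => simp [CTN, CT1]
  | insert k S hk ih =>
    rw [prod_insert hk, prod_insert hk, CTN_embVar_mul, ih]
    simpa using SetLike.prod_mem_graded _ _ _ fun j hj =>
      embVar_mem_gradeBy (ne_of_mem_of_not_mem hj hk) 1 (c j)

end LaurentEmbedding

/-- Constant-term Andréief identity:
`CT(det[f_j(x_k)]·det[g_ℓ(x_k⁻¹)]) = N!·det[CT(f_j(x) g_ℓ(x⁻¹))]`. -/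
theorem stmt_12 (N : ℕ) (f g : Fin N → AddMonoidAlgebra F ℤ) :
    CTN (Matrix.det (Matrix.of fun j k : Fin N => embVar k 1 (f j)) *
         Matrix.det (Matrix.of fun l k : Fin N => embVar k (-1) (g l)))
      = (N.factorial : F) *
        Matrix.det (Matrix.of fun j l : Fin N => CT1 (f j * inv1 (g l))) := by
  have hfactor (σ τ : Equiv.Perm (Fin N)) :
      ctnAddHom (∏ i, embVar i 1 (f (σ i)) * embVar i (-1) (g (τ i))) =
        ∏ i, CT1 (f (σ i) * inv1 (g (τ i))) := by
    simp_rw [embVar_neg_one, ← coe_embVarRingHom, ← map_mul, coe_embVarRingHom, coe_ctnAddHom]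
    exact CTN_prod_embVar _ univ
  have h := Matrix.map_det_mul_det_eq_factorial_smul ctnAddHom (Matrix.of fun j k : Fin N => embVar k 1 (f j))
    (Matrix.of fun l k : Fin N => embVar k (-1) (g l))
    (Matrix.of fun j l : Fin N => CT1 (f j * inv1 (g l))) hfactor
  rwa [coe_ctnAddHom, Fintype.card_fin, nsmul_eq_mul] at h
end
end

section
/- Let f_n (n ≥ 0) be monic polynomials over ℚ(q) of degree n and M a linear functional with M(f_n f_m) = 0 for n ≠ m. For partitions κ, λ with at most N parts, define F_κ = det[f_{κ_j+N-j}(x_i)]_{i,j=1}^N / det[x_i^{j-1}]_{i,j=1}^N and M^{(2)}(p) = M^{(0)}(p·V²) where V = Π_{i<j}(x_i - x_j). Then M^{(2)}(F_κ·F_λ) = 0 for κ ≠ λ, and M^{(2)}(F_κ·F_κ) = N! Π_{i=1}^N M(f_{κ_i+N-i}²). -/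
/-!
Since `V² = det[x_i^{N-j}]²`, the integrand `F_κ F_λ V²` is the product of the alternants
`det[f_{a_j}(x_i)]` and `det[f_{b_j}(x_i)]`, where `a_j = κ_j + N - j` and `b_j = λ_j + N - j`.
On a product of one entry from each row `M⁽⁰⁾` factorises over the variables, so expanding both
determinants gives `∑_{σ,τ} sgn σ sgn τ ∏_i M(f_{a(σ i)} f_{b(τ i)})`. By orthogonality a term
survives only if `a ∘ σ = b ∘ τ`; as `a` and `b` are strictly decreasing this forces `a = b` and
`σ = τ`, so the sum vanishes for `κ ≠ λ` and equals `N! ∏_i M(f_{a_i}²)` for `κ = λ`.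
-/

open Polynomial Finset
noncomputable section

/-- Apply the linear functional `M` in each of the `N` variables. -/
def M0 {N : ℕ} (M : Polynomial Fq →ₗ[Fq] Fq) (p : MvPolynomial (Fin N) Fq) : Fq :=
  ∑ d ∈ p.support, p.coeff d * ∏ i, M (Polynomial.X ^ d i)

/-- The Vandermonde determinant `det[x_i^{N-j}]`. -/
def VandDet (N : ℕ) : MvPolynomial (Fin N) Fq :=
  Matrix.det (Matrix.of fun i j : Fin N => (MvPolynomial.X i : MvPolynomial (Fin N) Fq) ^ (N - 1 - (j : ℕ)))

/-- `V = ∏_{i<j} (x_i - x_j)`. -/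
def Vprod (N : ℕ) : MvPolynomial (Fin N) Fq :=
  ∏ i : Fin N, ∏ j ∈ Finset.Ioi i, (MvPolynomial.X i - MvPolynomial.X j)

section PermSums

variable {ι α R : Type*} [Fintype ι] [CommRing R] {w : α → α → R}

lemma prod_eq_zero_of_ne (hw : ∀ m n, m ≠ n → w m n = 0) {u v : ι → α} (huv : u ≠ v) :
    ∏ i, w (u i) (v i) = 0 := by
  obtain ⟨i, hi⟩ := Function.ne_iff.mp huv
  exact prod_eq_zero (mem_univ i) (hw _ _ hi)

variable [DecidableEq ι]

lemma sum_perm_sign_smul_prod_eq_zero (hw : ∀ m n, m ≠ n → w m n = 0) {a c : ι → α}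
    (hac : Set.range a ≠ Set.range c) :
    ∑ σ : Equiv.Perm ι, ∑ τ : Equiv.Perm ι,
      (Equiv.Perm.sign σ * Equiv.Perm.sign τ) • ∏ i, w (a (σ i)) (c (τ i)) = 0 := by
  refine sum_eq_zero fun σ _ => sum_eq_zero fun τ _ => ?_
  have hne : a ∘ σ ≠ c ∘ τ := fun h => hac <| by
    rw [← EquivLike.range_comp a σ, h, EquivLike.range_comp]
  have hzero : ∏ i, w (a (σ i)) (c (τ i)) = 0 := prod_eq_zero_of_ne hw hne
  rw [hzero, smul_zero]

lemma sum_perm_sign_smul_prod_self (hw : ∀ m n, m ≠ n → w m n = 0) {a : ι → α}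
    (ha : Function.Injective a) :
    ∑ σ : Equiv.Perm ι, ∑ τ : Equiv.Perm ι,
      (Equiv.Perm.sign σ * Equiv.Perm.sign τ) • ∏ i, w (a (σ i)) (a (τ i))
      = ((Fintype.card ι).factorial : R) * ∏ i, w (a i) (a i) := by
  have hdiag (σ : Equiv.Perm ι) : ∑ τ : Equiv.Perm ι,
      (Equiv.Perm.sign σ * Equiv.Perm.sign τ) • ∏ i, w (a (σ i)) (a (τ i))
        = ∏ i, w (a i) (a i) := by
    rw [sum_eq_single_of_mem σ (mem_univ σ), Int.units_mul_self, one_smul]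
    · exact Equiv.prod_comp σ fun i => w (a i) (a i)
    · intro τ _ hτ
      have hne : a ∘ σ ≠ a ∘ τ := fun h => hτ (DFunLike.coe_injective (ha.comp_left h)).symm
      have hzero : ∏ i, w (a (σ i)) (a (τ i)) = 0 := prod_eq_zero_of_ne hw hne
      rw [hzero, smul_zero]
  rw [sum_congr rfl fun σ _ => hdiag σ, sum_const, card_univ, Fintype.card_perm, nsmul_eq_mul]

end PermSums

lemma aeval_X_eq_sum_monomial {R σ : Type*} [CommSemiring R] (i : σ) (g : R[X]) :
    aeval (MvPolynomial.X i : MvPolynomial σ R) g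
      = ∑ n ∈ g.support, MvPolynomial.monomial (Finsupp.single i n) (g.coeff n) := by
  conv_lhs => rw [g.as_sum_support]
  simp only [map_sum, aeval_monomial, MvPolynomial.X_pow_eq_monomial, MvPolynomial.algebraMap_eq,
    MvPolynomial.C_mul_monomial, mul_one]

lemma LinearMap.polynomial_apply_eq_sum_coeff {R A : Type*} [CommSemiring R] [AddCommMonoid A]
    [Module R A] (L : R[X] →ₗ[R] A) (g : R[X]) :
    L g = ∑ n ∈ g.support, g.coeff n • L (X ^ n) := by
  conv_lhs => rw [g.as_sum_support]
  simp only [map_sum, ← smul_X_eq_monomial, map_smul]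

lemma det_of_aeval_X_eq_sum {ι R : Type*} [Fintype ι] [DecidableEq ι] [CommRing R]
    (g : ι → R[X]) :
    (Matrix.of fun i j => aeval (MvPolynomial.X i : MvPolynomial ι R) (g j)).det
      = ∑ σ : Equiv.Perm ι, Equiv.Perm.sign σ •
          ∏ i, aeval (MvPolynomial.X i : MvPolynomial ι R) (g (σ i)) := by
  rw [← Matrix.det_transpose, Matrix.det_apply]
  rfl

lemma VandDet_eq_sign_mul_det_vandermonde (N : ℕ) :
    VandDet N = (Equiv.Perm.sign (Fin.revPerm (n := N)) : MvPolynomial (Fin N) Fq) *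
      (Matrix.vandermonde fun i => MvPolynomial.X i).det := by
  rw [← Matrix.det_permute', VandDet]
  congr 1
  refine Matrix.ext fun i j => ?_
  simp only [Matrix.of_apply, Matrix.submatrix_apply, id_eq, Matrix.vandermonde_apply,
    Fin.revPerm_apply, Fin.val_rev]
  congr 1
  omega

lemma Vprod_sq_eq_VandDet_sq (N : ℕ) : Vprod N ^ 2 = VandDet N ^ 2 := by
  have hsign : ((Equiv.Perm.sign (Fin.revPerm (n := N)) : ℤ) : MvPolynomial (Fin N) Fq) ^ 2 = 1 := by
    rw [← Int.cast_pow, ← Units.val_pow_eq_pow_val, Int.units_sq, Units.val_one, Int.cast_one]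
  rw [VandDet_eq_sign_mul_det_vandermonde, mul_pow, hsign, one_mul, Matrix.det_vandermonde, Vprod]
  simp_rw [← prod_pow, sub_sq_comm]

lemma strictAnti_add_tsub {N : ℕ} {κ : Fin N → ℕ} (hκ : Antitone κ) :
    StrictAnti fun j : Fin N => κ j + (N - 1 - j) := by
  intro i j hij
  have := hκ hij.le
  have : (i : ℕ) < j := hij
  have := j.isLt
  dsimp only
  omega

section M0

variable {N : ℕ} (M : Polynomial Fq →ₗ[Fq] Fq)

def M0ₗ : MvPolynomial (Fin N) Fq →ₗ[Fq] Fq :=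
  Finsupp.linearCombination Fq (fun d : Fin N →₀ ℕ => ∏ i, M (X ^ d i)) ∘ₗ
    (AddMonoidAlgebra.coeffLinearEquiv Fq).toLinearMap

lemma M0ₗ_apply (p : MvPolynomial (Fin N) Fq) : M0ₗ M p = M0 M p :=
  rfl

lemma M0_monomial (d : Fin N →₀ ℕ) (c : Fq) :
    M0 M (MvPolynomial.monomial d c) = c * ∏ i, M (X ^ d i) := by
  rw [← M0ₗ_apply]
  exact Finsupp.linearCombination_single Fq c d

lemma M0_prod_aeval (g : Fin N → Fq[X]) :
    M0 M (∏ i, aeval (MvPolynomial.X i : MvPolynomial (Fin N) Fq) (g i)) = ∏ i, M (g i) := by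
  classical
  have hM (i : Fin N) := M.polynomial_apply_eq_sum_coeff (g i)
  simp_rw [aeval_X_eq_sum_monomial, hM, smul_eq_mul, prod_univ_sum,
    ← MvPolynomial.monomial_sum_prod]
  rw [← M0ₗ_apply, map_sum]
  simp_rw [M0ₗ_apply, M0_monomial, ← prod_mul_distrib]
  refine sum_congr rfl fun D _ => prod_congr rfl fun j _ => ?_
  simp [Finsupp.finsetSum_apply, Finsupp.single_apply]

lemma M0_det_mul_det (g h : Fin N → Fq[X]) :
    M0 M ((Matrix.of fun i j => aeval (MvPolynomial.X i : MvPolynomial (Fin N) Fq) (g j)).det *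
        (Matrix.of fun i j => aeval (MvPolynomial.X i : MvPolynomial (Fin N) Fq) (h j)).det)
      = ∑ σ : Equiv.Perm (Fin N), ∑ τ : Equiv.Perm (Fin N),
          (Equiv.Perm.sign σ * Equiv.Perm.sign τ) • ∏ i, M (g (σ i) * h (τ i)) := by
  simp_rw [det_of_aeval_X_eq_sum, sum_mul_sum, smul_mul_smul_comm, ← prod_mul_distrib, ← map_mul]
  rw [← M0ₗ_apply, map_sum]
  simp_rw [map_sum, Units.smul_def, map_zsmul, M0ₗ_apply, M0_prod_aeval]

lemma M0_mul_mul_Vprod_sq (F G : MvPolynomial (Fin N) Fq) :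
    M0 M (F * G * Vprod N ^ 2) = M0 M (F * VandDet N * (G * VandDet N)) := by
  rw [Vprod_sq_eq_VandDet_sq]
  ring_nf

end M0

theorem stmt_13_general (N : ℕ) (f : ℕ → Polynomial Fq)
    (M : Polynomial Fq →ₗ[Fq] Fq) (horth : ∀ m n, m ≠ n → M (f m * f n) = 0)
    (κ lam : Fin N → ℕ) (hκ : Antitone κ) (hlam : Antitone lam)
    (Fκ Flam : MvPolynomial (Fin N) Fq)
    (hFκ : Fκ * VandDet N = Matrix.det (Matrix.of fun i j : Fin N =>
        Polynomial.aeval (MvPolynomial.X i : MvPolynomial (Fin N) Fq) (f (κ j + (N - 1 - (j : ℕ))))))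
    (hFlam : Flam * VandDet N = Matrix.det (Matrix.of fun i j : Fin N =>
        Polynomial.aeval (MvPolynomial.X i : MvPolynomial (Fin N) Fq) (f (lam j + (N - 1 - (j : ℕ)))))) :
    (κ ≠ lam → M0 M (Fκ * Flam * Vprod N ^ 2) = 0) ∧
    M0 M (Fκ * Fκ * Vprod N ^ 2)
      = (N.factorial : Fq) * ∏ i : Fin N, M (f (κ i + (N - 1 - (i : ℕ))) * f (κ i + (N - 1 - (i : ℕ)))) := by
  refine ⟨fun hne => ?_, ?_⟩
  · have hrange : Set.range (fun j : Fin N => κ j + (N - 1 - j))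
        ≠ Set.range (fun j : Fin N => lam j + (N - 1 - j)) := by
      rw [Ne, (strictAnti_add_tsub hκ).range_inj (strictAnti_add_tsub hlam)]
      exact fun h => hne <| funext fun j => by simpa using congrFun h j
    have hsum := sum_perm_sign_smul_prod_eq_zero (w := fun m n => M (f m * f n)) horth hrange
    rw [M0_mul_mul_Vprod_sq, hFκ, hFlam, M0_det_mul_det]
    exact hsum
  · have hsum := sum_perm_sign_smul_prod_self (w := fun m n => M (f m * f n)) horth
      (strictAnti_add_tsub hκ).injective
    rw [Fintype.card_fin] at hsum
    rw [M0_mul_mul_Vprod_sq, hFκ, M0_det_mul_det]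
    exact hsum

/-- Orthogonality of the multivariate polynomials `F_κ = det[f_{κ_j+N-j}(x_i)]/det[x_i^{j-1}]`
with respect to `M⁽²⁾(p) = M⁰(p·V²)`. -/
theorem stmt_13 (N : ℕ) (f : ℕ → Polynomial Fq)
    (hmonic : ∀ n, (f n).Monic) (hdeg : ∀ n, (f n).natDegree = n)
    (M : Polynomial Fq →ₗ[Fq] Fq) (horth : ∀ m n, m ≠ n → M (f m * f n) = 0)
    (κ lam : Fin N → ℕ) (hκ : Antitone κ) (hlam : Antitone lam)
    (Fκ Flam : MvPolynomial (Fin N) Fq)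
    (hFκ : Fκ * VandDet N = Matrix.det (Matrix.of fun i j : Fin N =>
        Polynomial.aeval (MvPolynomial.X i : MvPolynomial (Fin N) Fq) (f (κ j + (N - 1 - (j : ℕ))))))
    (hFlam : Flam * VandDet N = Matrix.det (Matrix.of fun i j : Fin N =>
        Polynomial.aeval (MvPolynomial.X i : MvPolynomial (Fin N) Fq) (f (lam j + (N - 1 - (j : ℕ)))))) :
    (κ ≠ lam → M0 M (Fκ * Flam * Vprod N ^ 2) = 0) ∧
    M0 M (Fκ * Fκ * Vprod N ^ 2)
      = (N.factorial : Fq) * ∏ i : Fin N, M (f (κ i + (N - 1 - (i : ℕ))) * f (κ i + (N - 1 - (i : ℕ)))) :=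
  stmt_13_general N f M horth κ lam hκ hlam Fκ Flam hFκ hFlam
end
end

section
/- Let f_n be monic orthogonal polynomials for a linear functional M on ℚ(q)[x] (M(f_i f_j) = 0 for i ≠ j, M(f_i²) ≠ 0). Then for any polynomial p, M^{(2)}(p(x_1)+⋯+p(x_N)) / M^{(2)}(1) = Σ_{j=0}^{N-1} M(p·f_j²)/M(f_j²), where M^{(2)}(h) = M^{(0)}(h·Π_{i<j}(x_i-x_j)²). -/
/-!
Column operations with the monic `f_j` (`deg f_j = j`) turn the Vandermonde determinant into
the alternant `det (f_j(x_i))`, so `V² = ∑_{σ,τ} sgn σ sgn τ ∏_i f_{σ i}(x_i) f_{τ i}(x_i)`.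
The functional `M⁽⁰⁾` factorises on products `∏_i g_i(x_i)`, and when all but one `g_i` equal `1`,
orthogonality kills every term with `σ ≠ τ`, because two distinct permutations differ in at least
two places. What survives is `N! ∏_j M(f_j²)` for `g = 1`, and summing over the position of `p`
gives `N! ∑_j M(p f_j²) ∏_{i ≠ j} M(f_i²)`; the `N!` and the product cancel in the quotient.
-/

open Polynomial Finset
noncomputable section

section ProductFunctional

variable {R : Type*} [CommRing R] {n : Type*} [Fintype n]

def productFunctional (M : R[X] →ₗ[R] R) : MvPolynomial n R →ₗ[R] R :=
  (MvPolynomial.basisMonomials n R).constr R fun d => ∏ i, M (X ^ d i)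

variable (M : R[X] →ₗ[R] R)

theorem productFunctional_monomial (d : n →₀ ℕ) (c : R) :
    productFunctional M (MvPolynomial.monomial d c) = c * ∏ i, M (X ^ d i) := by
  calc productFunctional M (MvPolynomial.monomial d c)
      = productFunctional M (c • MvPolynomial.basisMonomials n R d) := by
        simp [MvPolynomial.smul_monomial]
    _ = c * ∏ i, M (X ^ d i) := by
        rw [map_smul, productFunctional, Module.Basis.constr_basis, smul_eq_mul]

theorem productFunctional_prod_X_pow (k : n → ℕ) :
    productFunctional M (∏ i, MvPolynomial.X i ^ k i) = ∏ i, M (X ^ k i) := by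
  classical
  have hmonomial : ∏ i, (MvPolynomial.X i : MvPolynomial n R) ^ k i
      = MvPolynomial.monomial (Finsupp.equivFunOnFinite.symm k) 1 := by
    rw [MvPolynomial.monomial_eq, map_one, one_mul, Finsupp.prod_fintype _ _ (by simp)]
    rfl
  rw [hmonomial, productFunctional_monomial, one_mul]
  rfl

theorem productFunctional_prod_aeval (g : n → R[X]) :
    productFunctional M (∏ i, aeval (MvPolynomial.X i : MvPolynomial n R) (g i))
      = ∏ i, M (g i) := by
  classical
  have hM : ∀ i, M (g i) = ∑ k ∈ range ((g i).natDegree + 1), (g i).coeff k * M (X ^ k) := by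
    intro i
    conv_lhs => rw [← aeval_X_left_apply (g i), aeval_eq_sum_range]
    simp only [map_sum, map_smul, smul_eq_mul]
  simp only [aeval_eq_sum_range, prod_univ_sum, map_sum, hM, prod_smul, map_smul,
    productFunctional_prod_X_pow, smul_eq_mul, prod_mul_distrib]

end ProductFunctional

theorem M0_eq_productFunctional {N : ℕ} (M : Fq[X] →ₗ[Fq] Fq) (p : MvPolynomial (Fin N) Fq) :
    M0 M p = productFunctional M p := by
  conv_rhs => rw [p.as_sum]
  simp only [M0, map_sum, productFunctional_monomial]

def alternant {R S n : Type*} [CommRing R] [CommRing S] [Algebra R S] (v : n → S)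
    (f : n → R[X]) : Matrix n n S :=
  Matrix.of fun i j => aeval (v i) (f j)

section Determinant
variable {R : Type*} [CommRing R] {n : Type*} [Fintype n] [DecidableEq n]

theorem Matrix.det_sq_eq_sum_sum (A : Matrix n n R) :
    A.det ^ 2 = ∑ σ : Equiv.Perm n, ∑ τ : Equiv.Perm n,
      (Equiv.Perm.sign σ * Equiv.Perm.sign τ : ℤ) • ∏ i, A i (σ i) * A i (τ i) := by
  rw [← Matrix.det_transpose, sq, Matrix.det_apply, sum_mul_sum]
  refine sum_congr rfl fun σ _ => sum_congr rfl fun τ _ => ?_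
  simp only [Matrix.transpose_apply, prod_mul_distrib, Units.smul_def, smul_mul_smul_comm]

theorem Equiv.Perm.exists_apply_ne_notMem_of_ne {σ τ : Equiv.Perm n} (h : σ ≠ τ) {s : Set n}
    (hs : s.Subsingleton) : ∃ i ∉ s, σ i ≠ τ i := by
  have h2 := Equiv.Perm.two_le_card_support_of_ne_one (f := τ⁻¹ * σ) (by
    rwa [Ne, inv_mul_eq_one, eq_comm])
  by_contra! hall
  have hsupp : ((τ⁻¹ * σ).support : Set n).Subsingleton := hs.anti fun i hi => by
    by_contra his
    simp [Equiv.Perm.mem_support, hall i his] at hi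
  have := Finset.card_le_one_iff_subsingleton.mpr hsupp
  omega

theorem prod_Ioi_sub_sq_eq_det_alternant_sq {S : Type*} [CommRing S] [Algebra R S] {N : ℕ}
    (v : Fin N → S) (f : Fin N → R[X]) (hmonic : ∀ j, (f j).Monic)
    (hdeg : ∀ j, (f j).natDegree = j) :
    (∏ i : Fin N, ∏ j ∈ Ioi i, (v i - v j)) ^ 2 = (alternant v f).det ^ 2 := by
  nontriviality S
  have hdet := Matrix.det_eval_matrixOfPolynomials_eq_det_vandermonde v
    (fun j => (f j).map (algebraMap R S))
    (fun j => by rw [(hmonic j).natDegree_map, hdeg]) (fun j => (hmonic j).map _)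
  simp only [eval_map_algebraMap] at hdet
  rw [alternant, ← hdet, Matrix.det_vandermonde]
  simp only [← prod_pow]
  exact prod_congr rfl fun i _ => prod_congr rfl fun j _ => by ring

end Determinant

section Orthogonality
variable {R : Type*} [CommRing R] {n : Type*} [Fintype n] [DecidableEq n]
  (M : R[X] →ₗ[R] R) (f : n → R[X])

theorem prod_mulSingle_mul (F : n → R[X]) (j : n) (p : R[X]) :
    ∏ i, M ((Pi.mulSingle j p : n → R[X]) i * F i)
      = M (p * F j) * ∏ i ∈ univ.erase j, M (F i) := by
  rw [← mul_prod_erase univ _ (mem_univ j), Pi.mulSingle_eq_same]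
  congr 1
  exact prod_congr rfl fun i hi => by rw [Pi.mulSingle_eq_of_ne (ne_of_mem_erase hi), one_mul]

theorem productFunctional_prod_aeval_mul_det_sq (g : n → R[X]) :
    productFunctional M
        ((∏ i, aeval (MvPolynomial.X i) (g i)) * (alternant MvPolynomial.X f).det ^ 2)
      = ∑ σ : Equiv.Perm n, ∑ τ : Equiv.Perm n,
          (Equiv.Perm.sign σ * Equiv.Perm.sign τ : ℤ) • ∏ i, M (g i * (f (σ i) * f (τ i))) := by
  rw [Matrix.det_sq_eq_sum_sum, mul_sum, map_sum]
  refine sum_congr rfl fun σ _ => ?_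
  rw [mul_sum, map_sum]
  refine sum_congr rfl fun τ _ => ?_
  simp only [mul_smul_comm, map_zsmul, ← prod_mul_distrib, alternant, Matrix.of_apply, ← map_mul,
    productFunctional_prod_aeval]

variable {M f}

theorem sum_perm_sum_perm_eq_sum_diag_of_pairwise (horth : Pairwise fun a b => M (f a * f b) = 0)
    {g : n → R[X]} (hg : (Function.mulSupport g).Subsingleton) :
    ∑ σ : Equiv.Perm n, ∑ τ : Equiv.Perm n,
        (Equiv.Perm.sign σ * Equiv.Perm.sign τ : ℤ) • ∏ i, M (g i * (f (σ i) * f (τ i)))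
      = ∑ σ : Equiv.Perm n, ∏ i, M (g i * (f (σ i) * f (σ i))) := by
  refine sum_congr rfl fun σ _ => ?_
  rw [sum_eq_single σ]
  · simp [← Units.val_mul]
  · intro τ _ hτ
    obtain ⟨i, hgi, hi⟩ := Equiv.Perm.exists_apply_ne_notMem_of_ne (Ne.symm hτ) hg
    rw [prod_eq_zero (mem_univ i) (by simpa [not_not.mp hgi] using horth hi), smul_zero]
  · simp

theorem productFunctional_det_sq (horth : Pairwise fun a b => M (f a * f b) = 0) :
    productFunctional M ((alternant MvPolynomial.X f).det ^ 2)
      = Fintype.card (Equiv.Perm n) • ∏ j, M (f j * f j) := by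
  have h := productFunctional_prod_aeval_mul_det_sq M f 1
  rw [sum_perm_sum_perm_eq_sum_diag_of_pairwise horth (by simp)] at h
  simp only [Pi.one_apply, map_one, prod_const_one, one_mul] at h
  rw [h, Finset.card_univ.symm, ← sum_const]
  exact sum_congr rfl fun σ _ => Equiv.prod_comp σ fun j => M (f j * f j)

theorem productFunctional_sum_aeval_mul_det_sq (horth : Pairwise fun a b => M (f a * f b) = 0)
    (p : R[X]) :
    productFunctional M ((∑ k, aeval (MvPolynomial.X k) p) * (alternant MvPolynomial.X f).det ^ 2)
      = Fintype.card (Equiv.Perm n) •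
          ∑ j, M (p * (f j * f j)) * ∏ i ∈ univ.erase j, M (f i * f i) := by
  have haeval : ∀ k, aeval (MvPolynomial.X k) p
      = ∏ i, aeval (MvPolynomial.X i : MvPolynomial n R) ((Pi.mulSingle k p : n → R[X]) i) :=
    fun k => by
      rw [prod_eq_single k (fun i _ hi => by simp [Pi.mulSingle_eq_of_ne hi]) (by simp)]
      simp
  have hreindex : ∀ (σ : Equiv.Perm n) k,
      ∏ i, M ((Pi.mulSingle k p : n → R[X]) i * (f (σ i) * f (σ i)))
        = ∏ i, M ((Pi.mulSingle (σ k) p : n → R[X]) i * (f i * f i)) := fun σ k => by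
    rw [← Equiv.prod_comp σ (fun i => M ((Pi.mulSingle (σ k) p : n → R[X]) i * (f i * f i)))]
    simp only [Pi.mulSingle_apply, σ.injective.eq_iff]
  calc _
      = ∑ k, ∑ σ : Equiv.Perm n,
          ∏ i, M ((Pi.mulSingle k p : n → R[X]) i * (f (σ i) * f (σ i))) := by
        simp only [sum_mul, map_sum, haeval, productFunctional_prod_aeval_mul_det_sq,
          sum_perm_sum_perm_eq_sum_diag_of_pairwise horth
            (Set.subsingleton_singleton.anti Pi.mulSupport_mulSingle_subset)]
    _ = ∑ σ : Equiv.Perm n, ∑ k,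
          ∏ i, M ((Pi.mulSingle (σ k) p : n → R[X]) i * (f i * f i)) := by
        simp only [hreindex]; exact sum_comm
    _ = Fintype.card (Equiv.Perm n) •
          ∑ j, ∏ i, M ((Pi.mulSingle j p : n → R[X]) i * (f i * f i)) := by
        rw [← card_univ, ← sum_const]
        exact sum_congr rfl fun σ _ => Equiv.sum_comp σ fun j =>
          ∏ i, M ((Pi.mulSingle j p : n → R[X]) i * (f i * f i))
    _ = _ := by simp only [prod_mulSingle_mul]

end Orthogonality

theorem sum_mul_prod_erase_div_prod {K ι : Type*} [Field K] [DecidableEq ι] (s : Finset ι)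
    (a m : ι → K) (hm : ∀ i ∈ s, m i ≠ 0) :
    (∑ j ∈ s, a j * ∏ i ∈ s.erase j, m i) / ∏ i ∈ s, m i = ∑ j ∈ s, a j / m j := by
  rw [sum_div]
  refine sum_congr rfl fun j hj => ?_
  rw [← mul_prod_erase s m hj, mul_div_mul_right _ _
    (prod_ne_zero_iff.mpr fun i hi => hm i (mem_of_mem_erase hi))]

theorem productFunctional_sum_aeval_mul_det_sq_div {K : Type*} [Field K] [CharZero K]
    {n : Type*} [Fintype n] [DecidableEq n] {M : K[X] →ₗ[K] K} {f : n → K[X]}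
    (horth : Pairwise fun a b => M (f a * f b) = 0) (hne : ∀ j, M (f j * f j) ≠ 0) (p : K[X]) :
    productFunctional M ((∑ k, aeval (MvPolynomial.X k) p) * (alternant MvPolynomial.X f).det ^ 2)
        / productFunctional M ((alternant MvPolynomial.X f).det ^ 2)
      = ∑ j, M (p * (f j * f j)) / M (f j * f j) := by
  rw [productFunctional_sum_aeval_mul_det_sq horth, productFunctional_det_sq horth,
    nsmul_eq_mul, nsmul_eq_mul, mul_div_mul_left _ _ (Nat.cast_ne_zero.mpr Fintype.card_ne_zero),
    sum_mul_prod_erase_div_prod _ _ _ fun j _ => hne j]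

/-- The q-analog of Wigner's level-density formula:
`M⁽²⁾(p(x₁)+⋯+p(x_N))/M⁽²⁾(1) = ∑_{j=0}^{N-1} M(p f_j²)/M(f_j²)`,
with `M⁽²⁾(h) = M⁰(h·V²)`. -/
theorem stmt_16 (N : ℕ) (f : ℕ → Polynomial Fq)
    (hmonic : ∀ n, (f n).Monic) (hdeg : ∀ n, (f n).natDegree = n)
    (M : Polynomial Fq →ₗ[Fq] Fq) (horth : ∀ m n, m ≠ n → M (f m * f n) = 0)
    (hne : ∀ n, M (f n * f n) ≠ 0) (p : Polynomial Fq) :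
    M0 M ((∑ k : Fin N,
        Polynomial.aeval (MvPolynomial.X k : MvPolynomial (Fin N) Fq) p) * Vprod N ^ 2) /
      M0 M (Vprod N ^ 2)
      = ∑ j ∈ Finset.range N, M (p * (f j * f j)) / M (f j * f j) := by
  have hVprod : Vprod N ^ 2 = (alternant MvPolynomial.X fun j : Fin N => f j).det ^ 2 :=
    prod_Ioi_sub_sq_eq_det_alternant_sq _ _ (fun j => hmonic j) (fun j => hdeg j)
  rw [M0_eq_productFunctional, M0_eq_productFunctional, hVprod,
    productFunctional_sum_aeval_mul_det_sq_div (f := fun j : Fin N => f j)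
      (fun a b hab => horth a b (Fin.val_injective.ne hab)) (fun j => hne j),
    Fin.sum_univ_eq_sum_range (fun j => M (p * (f j * f j)) / M (f j * f j))]
end
end
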